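/- Let k ⊆ k' be an extension of finite fields, V a finite dimensional k-vector space, V' = V ⊗_k k', and G ≤ GL(V) ⊆ GL(V'). If G satisfies condition (B4) as a subgroup of GL(V), then G satisfies (B4) as a subgroup of GL(V'). -/
import Mathlib


/-!
STATEMENT 4.  `k ⊆ k'` finite fields, `V` a finite dimensional `k`-vector space,
`V' = k' ⊗_k V`, `G ≤ GL(V) ⊆ GL(V')` (via base change).  If `G` satisfies (B4) as a
subgroup of `GL(V)` then it satisfies (B4) as a subgroup of `GL(V')`.
Encodings as in the other files.
-/

open Module

variable (k V : Type*)

section Defs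
variable [Field k] [AddCommGroup V] [Module k V]

/-- Conjugation action of `GL(V)` on `ad V = End(V)`. -/
def conjAd (g : (V →ₗ[k] V)ˣ) (f : V →ₗ[k] V) : V →ₗ[k] V :=
  (g : V →ₗ[k] V) * f * ((g⁻¹ : (V →ₗ[k] V)ˣ) : V →ₗ[k] V)

/-- The generalized eigenspace `V_{g,α}`. -/
def GenEig (g : V →ₗ[k] V) (α : k) : Submodule k V :=
  Module.End.maxGenEigenspace g α

/-- The canonical complement of `V_{g,α}`, the kernel of the projection `V ↠ V_{g,α}`. -/
noncomputable def CoGenEig (g : V →ₗ[k] V) (α : k) : Submodule k V :=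
  LinearMap.range ((g - α • 1) ^ Module.finrank k V)

/-- `W ⊆ End(V)` is stable under conjugation by elements of `G`. -/
def ConjStable (G : Subgroup (V →ₗ[k] V)ˣ) (W : Submodule k (V →ₗ[k] V)) : Prop :=
  ∀ g ∈ G, ∀ f ∈ W, conjAd k V g f ∈ W

/-- `W` is an irreducible `G`-submodule of `ad V = End(V)` (conjugation action). -/
def IsIrredAdSub (G : Subgroup (V →ₗ[k] V)ˣ) (W : Submodule k (V →ₗ[k] V)) : Prop :=
  W ≠ ⊥ ∧ ConjStable k V G W ∧
    ∀ W' ≤ W, ConjStable k V G W' → W' = ⊥ ∨ W' = W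

/-- Condition (B2): `V` is absolutely irreducible as a `G`-module. -/
def AbsIrred (G : Subgroup (V →ₗ[k] V)ˣ) : Prop :=
  (⊥ : Submodule k V) ≠ ⊤ ∧
  (∀ U : Submodule k V, (∀ g ∈ G, ∀ v ∈ U, (g : V →ₗ[k] V) v ∈ U) → U = ⊥ ∨ U = ⊤) ∧
  (∀ f : V →ₗ[k] V, (∀ g ∈ G, (g : V →ₗ[k] V) * f = f * (g : V →ₗ[k] V)) →
    ∃ c : k, f = c • 1)

/-- Condition (B3): `H¹(G, ad⁰V) = 0`, stated via 1-cocycles and 1-coboundaries for the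
conjugation action on traceless endomorphisms. -/
def H1AdZeroVanishes (G : Subgroup (V →ₗ[k] V)ˣ) : Prop :=
  ∀ c : G → (V →ₗ[k] V),
    (∀ g : G, LinearMap.trace k V (c g) = 0) →
    (∀ g h : G, c (g * h) = c g + conjAd k V (g : (V →ₗ[k] V)ˣ) (c h)) →
    ∃ f : V →ₗ[k] V, LinearMap.trace k V f = 0 ∧
      ∀ g : G, c g = conjAd k V (g : (V →ₗ[k] V)ˣ) f - f

/-- Condition (B4). -/
def B4 (G : Subgroup (V →ₗ[k] V)ˣ) : Prop :=
  ∀ W : Submodule k (V →ₗ[k] V), IsIrredAdSub k V G W →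
    ∃ g ∈ G, ∃ α : k, ∃ f ∈ W,
      Module.finrank k (GenEig k V (g : V →ₗ[k] V) α) = 1 ∧
      ∃ v ∈ GenEig k V (g : V →ₗ[k] V) α, f v ∉ CoGenEig k V (g : V →ₗ[k] V) α

end Defs

section Aux
open TensorProduct Module

variable {k k' V : Type*} [Field k] [Field k'] [Algebra k k'] [AddCommGroup V] [Module k V]

/-- The `l`-component map `k' ⊗ V → V`. -/
noncomputable def cmpL (l : k' →ₗ[k] k) : (k' ⊗[k] V) →ₗ[k] V :=
  (TensorProduct.lid k V).toLinearMap ∘ₗ (LinearMap.rTensor V l)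

@[simp] lemma cmpL_tmul (l : k' →ₗ[k] k) (c : k') (v : V) :
    cmpL (V := V) l (c ⊗ₜ v) = l c • v := by simp [cmpL]

lemma cmpL_baseChange (l : k' →ₗ[k] k) (h : V →ₗ[k] V) (x : k' ⊗[k] V) :
    cmpL (V := V) l (h.baseChange k' x) = h (cmpL (V := V) l x) := by
  induction x with
  | zero => simp
  | tmul c v => simp
  | add a b ha hb => simp [ha, hb]

lemma baseChangeHom_apply' (h : V →ₗ[k] V) :
    (Module.End.baseChangeHom k k' V) h = h.baseChange k' := rfl

lemma recon [Module.Finite k k'] {ι : Type*} [Fintype ι] (b : Basis ι k k') (x : k' ⊗[k] V) :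
    ∑ i, (b i) ⊗ₜ (cmpL (V := V) (b.coord i) x) = x := by
  induction x with
  | zero => simp
  | tmul c v =>
      simp only [cmpL_tmul]
      calc ∑ i, b i ⊗ₜ[k] (b.coord i c • v) = ∑ i, (b.coord i c • b i) ⊗ₜ[k] v := by
            refine Finset.sum_congr rfl fun i _ => ?_
            rw [tmul_smul, smul_tmul']
        _ = (∑ i, b.repr c i • b i) ⊗ₜ[k] v := by rw [sum_tmul]; rfl
        _ = c ⊗ₜ[k] v := by rw [Basis.sum_repr]
  | add a b ha hb => simp only [map_add, tmul_add, Finset.sum_add_distrib, ha, hb]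

/-- The component of an endomorphism of `k' ⊗ V` along a functional `l : k' → k`. -/
noncomputable def lamE (l : k' →ₗ[k] k) (f' : (k' ⊗[k] V) →ₗ[k'] (k' ⊗[k] V)) : V →ₗ[k] V :=
  cmpL (V := V) l ∘ₗ (f'.restrictScalars k) ∘ₗ ((TensorProduct.mk k k' V) 1)

lemma lamE_apply (l : k' →ₗ[k] k) (f' : (k' ⊗[k] V) →ₗ[k'] (k' ⊗[k] V)) (v : V) :
    lamE l f' v = cmpL (V := V) l (f' ((1 : k') ⊗ₜ v)) := rfl

lemma key_op (g : V →ₗ[k] V) (α : k) (m : ℕ) :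
    ((g.baseChange k') - (algebraMap k k' α) • 1) ^ m = ((g - α • 1) ^ m).baseChange k' := by
  rw [LinearMap.baseChange_pow]
  congr 1
  rw [LinearMap.baseChange_sub]
  congr 1
  apply LinearMap.ext
  intro x
  induction x with
  | zero => simp
  | tmul c v =>
      rw [LinearMap.baseChange_tmul]
      simp only [LinearMap.smul_apply, Module.End.one_apply]
      rw [tmul_smul, algebraMap_smul]
  | add a b ha hb => simp only [map_add, LinearMap.smul_apply, Module.End.one_apply] at ha hb ⊢
                     rw [ha, hb]

lemma conjAd_add (g : (V →ₗ[k] V)ˣ) (a b : V →ₗ[k] V) :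
    conjAd k V g (a + b) = conjAd k V g a + conjAd k V g b := by
  simp [conjAd, mul_add, add_mul]

lemma conjAd_smul (g : (V →ₗ[k] V)ˣ) (c : k) (a : V →ₗ[k] V) :
    conjAd k V g (c • a) = c • conjAd k V g a := by
  simp [conjAd, mul_smul_comm, smul_mul_assoc]

lemma conjAd_zero (g : (V →ₗ[k] V)ˣ) : conjAd k V g 0 = 0 := by simp [conjAd]

lemma exists_irredAdSub [FiniteDimensional k V] (G : Subgroup (V →ₗ[k] V)ˣ) :
    ∀ (n : ℕ) (W : Submodule k (V →ₗ[k] V)), Module.finrank k W ≤ n → W ≠ ⊥ →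
      ConjStable k V G W → ∃ W₀ ≤ W, IsIrredAdSub k V G W₀ := by
  intro n
  induction n with
  | zero =>
      intro W hle hne _
      exact absurd (Submodule.finrank_eq_zero.mp (Nat.le_zero.mp hle)) hne
  | succ n ih =>
      intro W hle hne hst
      by_cases hc : ∀ U ≤ W, ConjStable k V G U → U = ⊥ ∨ U = W
      · exact ⟨W, le_refl _, hne, hst, hc⟩
      · push_neg at hc
        obtain ⟨U, hUW, hUst, hU⟩ := hc
        obtain ⟨W₀, hW₀U, hirr⟩ := ih U (by
          have hlt : U < W := lt_of_le_of_ne hUW hU.2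
          have := Submodule.finrank_lt_finrank_of_lt hlt
          omega) hU.1 hUst
        exact ⟨W₀, le_trans hW₀U hUW, hirr⟩

lemma genEig_eq_ker [FiniteDimensional k V] (g : V →ₗ[k] V) (α : k) :
    GenEig k V g α = LinearMap.ker ((g - α • 1) ^ Module.finrank k V) := by
  rw [GenEig, Module.End.maxGenEigenspace_eq_genEigenspace_finrank,
    Module.End.genEigenspace_nat]

lemma lamE_conj (l : k' →ₗ[k] k) (g : (V →ₗ[k] V)ˣ)
    (f' : (k' ⊗[k] V) →ₗ[k'] (k' ⊗[k] V)) :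
    lamE l (conjAd k' (k' ⊗[k] V)
      (Units.map (Module.End.baseChangeHom k k' V).toRingHom.toMonoidHom g) f')
      = conjAd k V g (lamE l f') := by
  set g' := Units.map (Module.End.baseChangeHom k k' V).toRingHom.toMonoidHom g with hg'
  have hcoe : ((g' : ((k' ⊗[k] V) →ₗ[k'] (k' ⊗[k] V))ˣ) : (k' ⊗[k] V) →ₗ[k'] (k' ⊗[k] V))
      = ((g : V →ₗ[k] V)).baseChange k' := rfl
  have hcoeinv : ((g'⁻¹ : ((k' ⊗[k] V) →ₗ[k'] (k' ⊗[k] V))ˣ) : (k' ⊗[k] V) →ₗ[k'] (k' ⊗[k] V))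
      = ((g⁻¹ : (V →ₗ[k] V)ˣ) : V →ₗ[k] V).baseChange k' := by
    rw [hg', ← MonoidHom.map_inv]
    rfl
  apply LinearMap.ext
  intro v
  show cmpL (V := V) l ((↑g' * f' * ↑g'⁻¹) ((1:k') ⊗ₜ v)) = _
  have h1 : (↑g' * f' * ↑g'⁻¹) ((1:k') ⊗ₜ[k] v)
      = ((g : V →ₗ[k] V)).baseChange k' (f' ((1:k') ⊗ₜ[k] (((g⁻¹ : (V →ₗ[k] V)ˣ) : V →ₗ[k] V) v))) := by
    rw [Module.End.mul_apply, Module.End.mul_apply, hcoeinv, LinearMap.baseChange_tmul, hcoe]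
  rw [h1, cmpL_baseChange]
  rfl

end Aux

open TensorProduct in
theorem stmt4 (k k' V : Type*) [Field k] [Finite k] [Field k'] [Finite k']
    [Algebra k k'] [AddCommGroup V] [Module k V] [FiniteDimensional k V]
    (G : Subgroup (V →ₗ[k] V)ˣ)
    (hB4 : B4 k V G) :
    B4 k' (k' ⊗[k] V)
      (Subgroup.map (Units.map (Module.End.baseChangeHom k k' V).toRingHom.toMonoidHom) G) := by
  classical
  intro W' hW'
  obtain ⟨hW'ne, hW'stab, -⟩ := hW'
  haveI : Module.Finite k k' := Module.Finite.of_finite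
  let b := Module.finBasis k k'
  set Φ := (Module.End.baseChangeHom k k' V).toRingHom.toMonoidHom with hΦ
  set S : Set (V →ₗ[k] V) :=
    {h | ∃ l : k' →ₗ[k] k, ∃ f' ∈ W', lamE l f' = h} with hS
  set W : Submodule k (V →ₗ[k] V) := Submodule.span k S with hWdef
  -- W is nonzero
  obtain ⟨f'0, hf'0W, hf'0⟩ := (Submodule.ne_bot_iff W').mp hW'ne
  have hex : ∃ v : V, f'0 ((1:k') ⊗ₜ v) ≠ 0 := by
    by_contra hall
    push_neg at hall
    apply hf'0
    apply LinearMap.ext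
    intro x
    induction x with
    | zero => simp
    | tmul c v =>
        have : (c ⊗ₜ[k] v : k' ⊗[k] V) = c • ((1:k') ⊗ₜ[k] v) := by
          rw [smul_tmul', smul_eq_mul, mul_one]
        rw [this, map_smul, hall, smul_zero]
        rfl
    | add a c ha hc => rw [map_add, ha, hc]; simp
  obtain ⟨v1, hv1⟩ := hex
  have hWne : W ≠ ⊥ := by
    have hcomp : ∃ i, cmpL (V := V) (b.coord i) (f'0 ((1:k') ⊗ₜ v1)) ≠ 0 := by
      by_contra hall
      push_neg at hall
      apply hv1
      rw [← recon b (f'0 ((1:k') ⊗ₜ v1))]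
      simp [hall]
    obtain ⟨i, hi⟩ := hcomp
    rw [Submodule.ne_bot_iff]
    refine ⟨lamE (b.coord i) f'0, Submodule.subset_span ⟨b.coord i, f'0, hf'0W, rfl⟩, ?_⟩
    intro h0
    apply hi
    rw [← lamE_apply, h0]
    rfl
  -- W is conjugation stable
  have hWst : ConjStable k V G W := by
    intro g hg f hf
    induction hf using Submodule.span_induction with
    | mem x hx =>
        obtain ⟨l, f', hf', rfl⟩ := hx
        exact Submodule.subset_span
          ⟨l, conjAd k' (k' ⊗[k] V) (Units.map Φ g) f',
            hW'stab _ ⟨g, hg, rfl⟩ f' hf', lamE_conj l g f'⟩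
    | zero => rw [conjAd_zero]; exact Submodule.zero_mem _
    | add a c ha hc hA hC => rw [conjAd_add]; exact Submodule.add_mem _ hA hC
    | smul c a ha hA => rw [conjAd_smul]; exact Submodule.smul_mem _ _ hA
  obtain ⟨W₀, hW₀W, hirr⟩ :=
    exists_irredAdSub G (Module.finrank k W) W le_rfl hWne hWst
  obtain ⟨g, hg, α, f, hfW₀, hdim, v, hv, hfv⟩ := hB4 W₀ hirr
  have hfW : f ∈ W := hW₀W hfW₀
  set hop : V →ₗ[k] V := (((g : (V →ₗ[k] V)ˣ) : V →ₗ[k] V) - α • 1) ^ Module.finrank k V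
    with hhop
  -- find a bad component
  have hnot : ¬ S ⊆ ((CoGenEig k V ((g : (V →ₗ[k] V)ˣ) : V →ₗ[k] V) α).comap
      (LinearMap.applyₗ (R := k) v) : Set (V →ₗ[k] V)) := by
    intro hsub
    exact hfv (Submodule.span_le.mpr hsub hfW)
  obtain ⟨h0, hh0S, hh0T⟩ := Set.not_subset.mp hnot
  obtain ⟨l, f', hf'W', hlf'⟩ := hh0S
  have hh0v : ¬ (h0 v ∈ CoGenEig k V ((g : (V →ₗ[k] V)ˣ) : V →ₗ[k] V) α) := hh0T
  -- the witnesses over k'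
  set g' := Units.map Φ g with hg'def
  have hcoe : ((g' : ((k' ⊗[k] V) →ₗ[k'] (k' ⊗[k] V))ˣ) : (k' ⊗[k] V) →ₗ[k'] (k' ⊗[k] V))
      = (((g : (V →ₗ[k] V)ˣ) : V →ₗ[k] V)).baseChange k' := rfl
  have hn' : Module.finrank k' (k' ⊗[k] V) = Module.finrank k V := Module.finrank_baseChange
  have hker : GenEig k V ((g : (V →ₗ[k] V)ˣ) : V →ₗ[k] V) α = LinearMap.ker hop :=
    genEig_eq_ker _ _
  have hker' : GenEig k' (k' ⊗[k] V)
      ((g' : ((k' ⊗[k] V) →ₗ[k'] (k' ⊗[k] V))ˣ) : (k' ⊗[k] V) →ₗ[k'] (k' ⊗[k] V))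
      (algebraMap k k' α) = LinearMap.ker (hop.baseChange k') := by
    rw [genEig_eq_ker, hn', hcoe, key_op, hhop]
  have hco' : CoGenEig k' (k' ⊗[k] V)
      ((g' : ((k' ⊗[k] V) →ₗ[k'] (k' ⊗[k] V))ˣ) : (k' ⊗[k] V) →ₗ[k'] (k' ⊗[k] V))
      (algebraMap k k' α) = LinearMap.range (hop.baseChange k') := by
    unfold CoGenEig
    rw [hn', hcoe, key_op, hhop]
  refine ⟨g', Subgroup.mem_map_of_mem _ hg, algebraMap k k' α, f', hf'W', ?_, ?_⟩
  · -- the generalized eigenspace over k' is one dimensional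
    rw [hker']
    have hdim' : Module.finrank k (LinearMap.ker hop) = 1 := by rw [← hker]; exact hdim
    obtain ⟨u0, hu0ne, hu0span⟩ := finrank_eq_one_iff'.mp hdim'
    have huker : (u0 : V) ∈ LinearMap.ker hop := u0.2
    have hune : (u0 : V) ≠ 0 := fun h => hu0ne (Subtype.ext h)
    have hspan : ∀ w ∈ LinearMap.ker hop, ∃ c : k, c • (u0 : V) = w := by
      intro w hw
      obtain ⟨c, hc⟩ := hu0span ⟨w, hw⟩
      exact ⟨c, congrArg Subtype.val hc⟩
    have hkerspan : LinearMap.ker (hop.baseChange k')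
        = Submodule.span k' {((1:k') ⊗ₜ[k] (u0 : V) : k' ⊗[k] V)} := by
      apply le_antisymm
      · intro x hx
        have hc : ∀ i, ∃ c : k, c • (u0 : V) = cmpL (V := V) (b.coord i) x := by
          intro i
          apply hspan
          rw [LinearMap.mem_ker, ← cmpL_baseChange, LinearMap.mem_ker.mp hx, map_zero]
        choose c hcc using hc
        rw [← recon b x]
        apply Submodule.sum_mem
        intro i _
        rw [← hcc i]
        have : (b i) ⊗ₜ[k] (c i • (u0 : V)) = (c i • b i) • ((1:k') ⊗ₜ[k] (u0 : V)) := by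
          rw [tmul_smul, smul_tmul', smul_tmul', smul_eq_mul, mul_one]
        rw [this]
        exact Submodule.smul_mem _ _ (Submodule.mem_span_singleton_self _)
      · rw [Submodule.span_le, Set.singleton_subset_iff]
        show ((1:k') ⊗ₜ[k] (u0 : V) : k' ⊗[k] V) ∈ LinearMap.ker (hop.baseChange k')
        rw [LinearMap.mem_ker, LinearMap.baseChange_tmul, LinearMap.mem_ker.mp huker,
          tmul_zero]
    have h1u : ((1:k') ⊗ₜ[k] (u0 : V) : k' ⊗[k] V) ≠ 0 := by
      have h1 : b.repr 1 ≠ 0 := by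
        intro h
        have := b.repr.injective (by rw [h, map_zero] : b.repr 1 = b.repr 0)
        exact one_ne_zero this
      obtain ⟨i, hi⟩ := Finsupp.ne_iff.mp h1
      intro h0
      have := congrArg (cmpL (V := V) (b.coord i)) h0
      rw [cmpL_tmul, map_zero] at this
      rcases smul_eq_zero.mp this with hc | hu
      · exact hi (by simpa [Basis.coord_apply] using hc)
      · exact hune hu
    rw [hkerspan]
    exact finrank_span_singleton h1u
  · -- the pairing is nonzero
    refine ⟨(1:k') ⊗ₜ[k] v, ?_, ?_⟩
    · show ((1:k') ⊗ₜ[k] v : k' ⊗[k] V) ∈ Module.End.maxGenEigenspace _ _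
      rw [Module.End.mem_maxGenEigenspace]
      obtain ⟨m, hm⟩ := (Module.End.mem_maxGenEigenspace _ _ _).mp hv
      refine ⟨m, ?_⟩
      rw [hcoe, key_op, LinearMap.baseChange_tmul, hm, tmul_zero]
    · intro hmem
      rw [hco'] at hmem
      obtain ⟨y, hy⟩ := hmem
      apply hh0v
      show h0 v ∈ LinearMap.range hop
      rw [← hlf', lamE_apply, ← hy, cmpL_baseChange]
      exact LinearMap.mem_range_self hop _
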